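/- In the random model with B-irreducible probability matrices, the push-sum algorithm achieves average consensus almost surely: for every x(0) ∈ ℝⁿ and every i ∈ [n], almost surely lim_{t→∞} z_i(t) = x̄. -/

import Mathlib

/-!
Push-sum conserves the masses `∑ x(t) = ∑ x(0)` and `∑ y(t) = n`, so the smallest ratio
`m(t) = min_k x_k(t) / y_k(t)` never exceeds the average `x̄`; it is nondecreasing because
`x - m(s) • y` stays nonnegative under nonnegative matrices. Call a window of `n * B` steps good
if every edge of `P` in it is realised in `W`. In a good window each of the `n` blocks of length
`B` is irreducible, so the set of nodes reached from a node `j` where `x - m(s) • y` is at least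
its average grows by one per block. As nonzero weights are at least `1 / n`, afterwards every
coordinate of `x - m(s) • y` is at least `n ^ (-n B)` times that average, and `x̄ - m` shrinks by
the factor `1 - n ^ (-n B - 1)`. Disjoint windows are good independently, each with probability
at least `ε ^ (n B n²)`, so by the second Borel–Cantelli lemma infinitely many are good almost
surely; hence `m(t) → x̄`, and the same argument for `-x(0)` bounds the largest ratio.
-/

open Finset MeasureTheory

/-- `A_{S S̄} = ∑_{i ∈ S, j ∉ S} A i j`. -/
def flowSum {n : ℕ} (A : Matrix (Fin n) (Fin n) ℝ) (S : Finset (Fin n)) : ℝ :=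
  ∑ i ∈ S, ∑ j ∈ Sᶜ, A i j

/-- `S` is a nontrivial subset of `[n]`. -/
def NontrivialSubset {n : ℕ} (S : Finset (Fin n)) : Prop :=
  S.Nonempty ∧ S ≠ Finset.univ

/-- Directed infinite flow property: for every nontrivial `S`, `∑_t A_{S S̄}(t) = ∞`. -/
def DirectedInfiniteFlow {n : ℕ} (A : ℕ → Matrix (Fin n) (Fin n) ℝ) : Prop :=
  ∀ S : Finset (Fin n), NontrivialSubset S →
    Filter.Tendsto (fun T => ∑ t ∈ Finset.range T, flowSum (A t) S)
      Filter.atTop Filter.atTop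

/-- The backward product `A(t:s) = A(t) A(t-1) ⋯ A(s)`. -/
def matProd {n : ℕ} (A : ℕ → Matrix (Fin n) (Fin n) ℝ) (t s : ℕ) :
    Matrix (Fin n) (Fin n) ℝ :=
  (((List.range (t + 1 - s)).map fun k => A (t - k))).prod

/-- Row-stochastic nonnegative matrix. -/
def RowStochastic {n : ℕ} (A : Matrix (Fin n) (Fin n) ℝ) : Prop :=
  (∀ i j, 0 ≤ A i j) ∧ ∀ i, ∑ j, A i j = 1

/-- Column-stochastic nonnegative matrix. -/
def ColStochastic {n : ℕ} (A : Matrix (Fin n) (Fin n) ℝ) : Prop :=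
  (∀ i j, 0 ≤ A i j) ∧ ∀ j, ∑ i, A i j = 1

/-- `W` is the degree-normalized adjacency matrix of a digraph with all self-loops:
`W i j = 1 / (out-degree of j)` if there is an edge from `j` to `i`, else `0`. -/
def OutDegreeForm {n : ℕ} (W : Matrix (Fin n) (Fin n) ℝ) : Prop :=
  ∃ N : Fin n → Finset (Fin n), (∀ j, j ∈ N j) ∧
    ∀ i j, W i j = if i ∈ N j then (1 : ℝ) / (N j).card else 0

/-- Strong aperiodicity of a sequence of matrices. -/
def StronglyAperiodic {n : ℕ} (A : ℕ → Matrix (Fin n) (Fin n) ℝ) : Prop :=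
  ∃ γ : ℝ, 0 < γ ∧ ∀ t i, γ ≤ A t i i

/-- The times `k_q`: `k_0 = 0` and `k_q` is the least `t' > k_{q-1}` with
nonzero flow `∑_{t=k_{q-1}}^{t'-1} A_{S S̄}(t) > 0` across every nontrivial cut. -/
noncomputable def kSeq {n : ℕ} (A : ℕ → Matrix (Fin n) (Fin n) ℝ) : ℕ → ℕ
  | 0 => 0
  | q + 1 => sInf {t' : ℕ | kSeq A q < t' ∧ ∀ S : Finset (Fin n), NontrivialSubset S →
      0 < ∑ t ∈ Finset.Ico (kSeq A q) t', flowSum (A t) S}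

/-- `ℓ_q = k_{qn} - k_{(q-1)n}`. -/
noncomputable def ellSeq {n : ℕ} (A : ℕ → Matrix (Fin n) (Fin n) ℝ) (q : ℕ) : ℕ :=
  kSeq A (q * n) - kSeq A ((q - 1) * n)

/-- The index set `Q_{t,s} = {q ≥ 1 : s ≤ k_{(q-1)n}, k_{qn} ≤ t}` (as a `Finset`). -/
noncomputable def QSet {n : ℕ} (A : ℕ → Matrix (Fin n) (Fin n) ℝ) (t s : ℕ) :
    Finset ℕ :=
  (Finset.Icc 1 t).filter fun q => s ≤ kSeq A ((q - 1) * n) ∧ kSeq A (q * n) ≤ t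

/-- `Λ_{t,s} = ∏_{q ∈ Q_{t,s}} (1 - 1/n^{ℓ_q})`. -/
noncomputable def Lam {n : ℕ} (A : ℕ → Matrix (Fin n) (Fin n) ℝ) (t s : ℕ) : ℝ :=
  ∏ q ∈ QSet A t s, (1 - 1 / (n : ℝ) ^ (ellSeq A q))

/-- Push-sum iterates: `u(0) = u0`, `u(t+1) = W(t) u(t)`. -/
def pushIter {n : ℕ} (W : ℕ → Matrix (Fin n) (Fin n) ℝ) (u0 : Fin n → ℝ) : ℕ → Fin n → ℝ
  | 0 => u0
  | t + 1 => (W t).mulVec (pushIter W u0 t)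

/-- A nonnegative matrix is irreducible if the digraph with an edge from `j` to `i`
whenever `A i j > 0` is strongly connected. -/
def IrreducibleMat {n : ℕ} (A : Matrix (Fin n) (Fin n) ℝ) : Prop :=
  ∀ i j : Fin n, Relation.ReflTransGen (fun a b => 0 < A b a) i j

/-- The random column-stochastic matrix built from the Bernoulli variables `R`:
`W(t)(ω)_{ij} = R_{ij}(t)(ω) / ∑_k R_{kj}(t)(ω)`. -/
noncomputable def Wof {n : ℕ} {Ω : Type*} (R : ℕ → Fin n → Fin n → Ω → ℝ)
    (t : ℕ) (ω : Ω) : Matrix (Fin n) (Fin n) ℝ :=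
  fun i j => R t i j ω / ∑ k, R t k j ω

open Filter Topology Matrix

theorem tendsto_zero_of_antitone_of_frequently_le_mul {g : ℕ → ℝ} (hg : Antitone g)
    (hg₀ : ∀ t, 0 ≤ g t) {q : ℝ} (hq : q < 1) (hcontr : ∃ᶠ s in atTop, ∃ t, g t ≤ q * g s) :
    Tendsto g atTop (𝓝 0) := by
  have hbdd : BddBelow (Set.range g) := ⟨0, Set.forall_mem_range.2 hg₀⟩
  have hlim := tendsto_atTop_ciInf hg hbdd
  have hL₀ : 0 ≤ ⨅ t, g t := le_ciInf hg₀
  have hLq : ⨅ t, g t ≤ q * ⨅ t, g t :=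
    ge_of_tendsto_of_frequently (hlim.const_mul q) <|
      hcontr.mono fun _ ⟨t, ht⟩ => (ciInf_le hbdd t).trans ht
  have hL : ⨅ t, g t = 0 := by nlinarith
  rwa [hL] at hlim

theorem IrreducibleMat.mono {n : ℕ} {A A' : Matrix (Fin n) (Fin n) ℝ}
    (hA : IrreducibleMat A) (h : ∀ i j, 0 < A i j → 0 < A' i j) : IrreducibleMat A' :=
  fun i j => Relation.ReflTransGen.mono (fun a b hab => h b a hab) i j (hA i j)

theorem IrreducibleMat.sum_of_pos_imp {n : ℕ} {A A' : ℕ → Matrix (Fin n) (Fin n) ℝ}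
    {I : Finset ℕ} (hA : IrreducibleMat (∑ t ∈ I, A t)) (hA' : ∀ t ∈ I, ∀ i j, 0 ≤ A' t i j)
    (h : ∀ t ∈ I, ∀ i j, 0 < A t i j → 0 < A' t i j) : IrreducibleMat (∑ t ∈ I, A' t) := by
  refine hA.mono fun i j hij => ?_
  rw [Matrix.sum_apply] at hij ⊢
  obtain ⟨t, ht, hAt⟩ := Finset.exists_lt_of_sum_lt (f := fun _ => (0 : ℝ)) (by simpa using hij)
  exact (h t ht i j hAt).trans_le
    (Finset.single_le_sum (f := fun t => A' t i j) (fun t ht => hA' t ht i j) ht)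

theorem IrreducibleMat.exists_edge_leaving {n : ℕ}
    {A : Matrix (Fin n) (Fin n) ℝ} (hA : IrreducibleMat A) {S : Set (Fin n)}
    {a₀ b₀ : Fin n} (ha₀ : a₀ ∈ S) (hb₀ : b₀ ∉ S) : ∃ a ∈ S, ∃ b ∉ S, 0 < A b a := by
  induction hA a₀ b₀ using Relation.ReflTransGen.head_induction_on with
  | refl => exact absurd ha₀ hb₀
  | @head a c hac _ ih =>
    by_cases hc : c ∈ S
    · exact ih hc
    · exact ⟨a, ha₀, c, hc, hac⟩

section PushIter

variable {n : ℕ} {W : ℕ → Matrix (Fin n) (Fin n) ℝ}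

theorem pushIter_neg (u₀ : Fin n → ℝ) (t : ℕ) : pushIter W (-u₀) t = -pushIter W u₀ t := by
  induction t with
  | zero => rfl
  | succ t ih => simp only [pushIter, ih, Matrix.mulVec_neg]

theorem pushIter_sub_smul_succ (u₀ w₀ : Fin n → ℝ) (a : ℝ) (r : ℕ) :
    pushIter W u₀ (r + 1) - a • pushIter W w₀ (r + 1) =
      W r *ᵥ (pushIter W u₀ r - a • pushIter W w₀ r) := by
  simp only [pushIter, Matrix.mulVec_sub, Matrix.mulVec_smul]

theorem sum_pushIter (hW : ∀ t, ColStochastic (W t)) (u₀ : Fin n → ℝ) (t : ℕ) :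
    ∑ i, pushIter W u₀ t i = ∑ i, u₀ i := by
  induction t with
  | zero => rfl
  | succ t ih =>
    simp only [pushIter, Matrix.mulVec, dotProduct]
    rw [Finset.sum_comm, ← ih]
    exact Finset.sum_congr rfl fun j _ => by rw [← Finset.sum_mul, (hW t).2 j, one_mul]

theorem sum_pushIter_one (hW : ∀ t, ColStochastic (W t)) (t : ℕ) :
    ∑ i, pushIter W (fun _ => 1) t i = n := by
  simp [sum_pushIter hW]

theorem pushIter_pos (hW : ∀ t i j, 0 ≤ W t i j) (hdiag : ∀ t i, 0 < W t i i)
    {u₀ : Fin n → ℝ} (hu₀ : ∀ i, 0 < u₀ i) (t : ℕ) (i : Fin n) : 0 < pushIter W u₀ t i := by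
  induction t generalizing i with
  | zero => exact hu₀ i
  | succ t ih =>
    calc 0 < W t i i * pushIter W u₀ t i := mul_pos (hdiag t i) (ih i)
      _ ≤ ∑ j, W t i j * pushIter W u₀ t j :=
        Finset.single_le_sum (fun j _ => mul_nonneg (hW t i j) (ih j).le) (Finset.mem_univ i)

theorem nonneg_of_trajectory (hW : ∀ t i j, 0 ≤ W t i j) {v : ℕ → Fin n → ℝ}
    (hv : ∀ r, v (r + 1) = W r *ᵥ v r) {s t : ℕ} (hs : 0 ≤ v s) (hst : s ≤ t) : 0 ≤ v t := by
  induction t, hst using Nat.le_induction with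
  | base => exact hs
  | succ t _ ih =>
    rw [hv t]
    intro i
    show 0 ≤ ∑ j, W t i j * v t j
    exact Finset.sum_nonneg fun j _ => mul_nonneg (hW t i j) (ih j)

/-- `Reach W s j d b`: there is a walk `j = a₀ → a₁ → ⋯ → a_d = b` whose `e`-th step is an
edge of `W (s + e)`, i.e. `0 < W (s + e) a_{e+1} a_e`. -/
def Reach (W : ℕ → Matrix (Fin n) (Fin n) ℝ) (s : ℕ) (j : Fin n) : ℕ → Fin n → Prop
  | 0 => fun b => b = j
  | d + 1 => fun b => ∃ a, Reach W s j d a ∧ 0 < W (s + d) b a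

theorem Reach.mono (hdiag : ∀ t i, 0 < W t i i) {s d d' : ℕ} {j b : Fin n}
    (h : Reach W s j d b) (hdd' : d ≤ d') : Reach W s j d' b := by
  induction d', hdd' using Nat.le_induction with
  | base => exact h
  | succ d' _ ih => exact ⟨b, ih, hdiag _ b⟩

theorem Reach.exists_new_of_irreducible (hdiag : ∀ t i, 0 < W t i i)
    {s d B : ℕ} {j b₀ : Fin n} (hb₀ : ¬Reach W s j d b₀)
    (hirr : IrreducibleMat (∑ t ∈ Finset.Ico (s + d) (s + d + B), W t)) :
    ∃ b, ¬Reach W s j d b ∧ Reach W s j (d + B) b := by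
  obtain ⟨a, ha, b, hb, hab⟩ := hirr.exists_edge_leaving
    (S := {b | Reach W s j d b}) (a₀ := j)
    (Reach.mono hdiag (show Reach W s j 0 j from rfl) d.zero_le) hb₀
  rw [Matrix.sum_apply] at hab
  obtain ⟨t, ht, hWt⟩ := Finset.exists_lt_of_sum_lt (f := fun _ => (0 : ℝ)) (by simpa using hab)
  rw [Finset.mem_Ico] at ht
  have hreach : Reach W s j (t - s + 1) b :=
    ⟨a, ha.mono hdiag (by omega), by rwa [Nat.add_sub_cancel' (by omega)]⟩
  exact ⟨b, hb, hreach.mono hdiag (by omega)⟩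

theorem reach_of_irreducible_windows (hdiag : ∀ t i, 0 < W t i i) {s B : ℕ}
    (hirr : ∀ k < n, IrreducibleMat (∑ t ∈ Finset.Ico (s + k * B) (s + (k + 1) * B), W t))
    (j b : Fin n) : Reach W s j (n * B) b := by
  classical
  set S : ℕ → Finset (Fin n) := fun d => Finset.univ.filter (Reach W s j d)
  have hmono k : S (k * B) ⊆ S ((k + 1) * B) := fun b hb => by
    simp only [S, Finset.mem_filter, Finset.mem_univ, true_and] at hb ⊢
    exact hb.mono hdiag (Nat.mul_le_mul_right B k.le_succ)
  have key : ∀ k ≤ n, (∀ b, Reach W s j (k * B) b) ∨ k + 1 ≤ (S (k * B)).card := by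
    intro k
    induction k with
    | zero =>
      refine fun _ => .inr (Finset.card_pos.2 ⟨j, ?_⟩)
      rw [Finset.mem_filter, zero_mul]
      exact ⟨Finset.mem_univ j, rfl⟩
    | succ k ih =>
      intro hk
      by_cases hall : ∀ b, Reach W s j (k * B) b
      · exact .inl fun b => (hall b).mono hdiag (Nat.mul_le_mul_right B k.le_succ)
      push Not at hall
      obtain ⟨b₀, hb₀⟩ := hall
      obtain ⟨b, hb, hb'⟩ := Reach.exists_new_of_irreducible hdiag hb₀
        (by rw [add_assoc, ← Nat.succ_mul]; exact hirr k hk)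
      have hlt : (S (k * B)).card < (S ((k + 1) * B)).card :=
        Finset.card_lt_card <| (Finset.ssubset_iff_of_subset (hmono k)).2
          ⟨b, by simpa [S, Nat.succ_mul] using hb', by simpa [S] using hb⟩
      exact .inr (((ih (Nat.le_of_succ_le hk)).resolve_left fun h => hb₀ (h b₀)).trans_lt hlt)
  refine (key n le_rfl).resolve_right (fun hcard => ?_) b
  have := Finset.card_le_univ (S (n * B))
  simp only [Fintype.card_fin] at this
  omega

theorem Reach.pow_mul_le (hW : ∀ t i j, 0 ≤ W t i j) {γ : ℝ} (hγ : 0 ≤ γ)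
    (hWγ : ∀ t i j, 0 < W t i j → γ ≤ W t i j) {v : ℕ → Fin n → ℝ}
    (hv : ∀ r, v (r + 1) = W r *ᵥ v r) {s : ℕ} (hs : 0 ≤ v s) {j : Fin n} :
    ∀ {d : ℕ} {b : Fin n}, Reach W s j d b → γ ^ d * v s j ≤ v (s + d) b
  | 0, _, rfl => by simp
  | d + 1, b, ⟨a, ha, hba⟩ => by
    have hnonneg : 0 ≤ v (s + d) := nonneg_of_trajectory hW hv hs (Nat.le_add_right s d)
    calc γ ^ (d + 1) * v s j = γ * (γ ^ d * v s j) := by ring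
      _ ≤ W (s + d) b a * v (s + d) a :=
        mul_le_mul (hWγ _ _ _ hba) (ha.pow_mul_le hW hγ hWγ hv hs)
          (mul_nonneg (pow_nonneg hγ d) (hs j)) (hW _ _ _)
      _ ≤ ∑ c, W (s + d) b c * v (s + d) c :=
        Finset.single_le_sum (f := fun c => W (s + d) b c * v (s + d) c)
          (fun c _ => mul_nonneg (hW _ _ _) (hnonneg c)) (Finset.mem_univ a)
      _ = v (s + (d + 1)) b := by rw [← add_assoc, hv]; rfl

theorem pow_mul_avg_le_of_irreducible [NeZero n] (hW : ∀ t i j, 0 ≤ W t i j)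
    (hdiag : ∀ t i, 0 < W t i i) {γ : ℝ} (hγ : 0 ≤ γ)
    (hWγ : ∀ t i j, 0 < W t i j → γ ≤ W t i j) {s B : ℕ}
    (hirr : ∀ k < n, IrreducibleMat (∑ t ∈ Finset.Ico (s + k * B) (s + (k + 1) * B), W t))
    {v : ℕ → Fin n → ℝ} (hv : ∀ r, v (r + 1) = W r *ᵥ v r) (hs : 0 ≤ v s) (k : Fin n) :
    γ ^ (n * B) * ((∑ j, v s j) / n) ≤ v (s + n * B) k := by
  obtain ⟨j, -, hj⟩ := Finset.exists_le_of_sum_le Finset.univ_nonempty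
    (f := fun _ => (∑ j, v s j) / n) (g := v s) (by simp [mul_div_cancel₀, NeZero.ne])
  calc γ ^ (n * B) * ((∑ j, v s j) / n) ≤ γ ^ (n * B) * v s j := by gcongr
    _ ≤ v (s + n * B) k := (reach_of_irreducible_windows hdiag hirr j k).pow_mul_le hW hγ hWγ hv hs

end PushIter

section PushSum

variable {n : ℕ} [NeZero n] {W : ℕ → Matrix (Fin n) (Fin n) ℝ}

noncomputable def minRatio (x y : Fin n → ℝ) : ℝ :=
  Finset.univ.inf' Finset.univ_nonempty fun k => x k / y k

theorem minRatio_le_div (x y : Fin n → ℝ) (k : Fin n) : minRatio x y ≤ x k / y k :=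
  Finset.inf'_le _ (Finset.mem_univ k)

theorem le_minRatio_iff {x y : Fin n → ℝ} (hy : ∀ k, 0 < y k) {a : ℝ} :
    a ≤ minRatio x y ↔ 0 ≤ x - a • y := by
  simp only [minRatio, Finset.le_inf'_iff, Finset.mem_univ, true_implies, le_div_iff₀ (hy _),
    Pi.le_def, Pi.smul_apply, smul_eq_mul, sub_nonneg]

theorem sub_minRatio_smul_nonneg (x : Fin n → ℝ) {y : Fin n → ℝ} (hy : ∀ k, 0 < y k) :
    0 ≤ x - minRatio x y • y :=
  (le_minRatio_iff hy).1 le_rfl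

theorem minRatio_pushIter_le_avg (hW : ∀ t, ColStochastic (W t)) (hdiag : ∀ t i, 0 < W t i i)
    (x₀ : Fin n → ℝ) (t : ℕ) :
    minRatio (pushIter W x₀ t) (pushIter W (fun _ => 1) t) ≤ (∑ j, x₀ j) / n := by
  have hy := pushIter_pos (fun t => (hW t).1) hdiag (fun _ => one_pos) t
  have h := Finset.sum_nonneg fun k (_ : k ∈ Finset.univ) =>
    sub_minRatio_smul_nonneg (pushIter W x₀ t) hy k
  simp only [Pi.sub_apply, Pi.smul_apply, smul_eq_mul, Finset.sum_sub_distrib, ← Finset.mul_sum,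
    sub_nonneg] at h
  rw [sum_pushIter hW x₀ t, sum_pushIter_one hW] at h
  rwa [le_div_iff₀ (Nat.cast_pos.2 (NeZero.pos n))]

theorem monotone_minRatio_pushIter (hW : ∀ t, ColStochastic (W t))
    (hdiag : ∀ t i, 0 < W t i i) (x₀ : Fin n → ℝ) :
    Monotone fun t => minRatio (pushIter W x₀ t) (pushIter W (fun _ => 1) t) := by
  intro s t hst
  have hy := pushIter_pos (fun t => (hW t).1) hdiag (fun _ => one_pos)
  set a := minRatio (pushIter W x₀ s) (pushIter W (fun _ => 1) s)
  set v := fun r => pushIter W x₀ r - a • pushIter W (fun _ => 1) r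
  rw [le_minRatio_iff (hy t)]
  exact nonneg_of_trajectory (v := v) (fun t => (hW t).1) (pushIter_sub_smul_succ x₀ _ a)
    (sub_minRatio_smul_nonneg _ (hy s)) hst

theorem avg_sub_minRatio_pushIter_le (hW : ∀ t, ColStochastic (W t))
    (hdiag : ∀ t i, 0 < W t i i) {γ : ℝ} (hγ : 0 ≤ γ)
    (hWγ : ∀ t i j, 0 < W t i j → γ ≤ W t i j) {s B : ℕ}
    (hirr : ∀ k < n, IrreducibleMat (∑ t ∈ Finset.Ico (s + k * B) (s + (k + 1) * B), W t))
    (x₀ : Fin n → ℝ) :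
    (∑ j, x₀ j) / n - minRatio (pushIter W x₀ (s + n * B)) (pushIter W (fun _ => 1) (s + n * B))
      ≤ (1 - γ ^ (n * B) / n) *
        ((∑ j, x₀ j) / n - minRatio (pushIter W x₀ s) (pushIter W (fun _ => 1) s)) := by
  set y := pushIter W (fun _ => 1)
  set avg := (∑ j, x₀ j) / n
  set a := minRatio (pushIter W x₀ s) (y s)
  have hn : (0 : ℝ) < n := Nat.cast_pos.2 (NeZero.pos n)
  have hy := pushIter_pos (fun t => (hW t).1) hdiag (fun _ => one_pos)
  have hgain := pow_mul_avg_le_of_irreducible (v := fun r => pushIter W x₀ r - a • y r)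
    (fun t => (hW t).1) hdiag hγ hWγ hirr (pushIter_sub_smul_succ x₀ _ a)
    (sub_minRatio_smul_nonneg _ (hy s))
  have hmass : (∑ j, (pushIter W x₀ s - a • y s) j) / n = avg - a := by
    simp only [Pi.sub_apply, Pi.smul_apply, smul_eq_mul, Finset.sum_sub_distrib, ← Finset.mul_sum]
    rw [sum_pushIter hW x₀ s, sum_pushIter_one hW, sub_div, mul_div_cancel_right₀ _ hn.ne']
  have hgap : 0 ≤ avg - a := sub_nonneg.2 (minRatio_pushIter_le_avg hW hdiag x₀ s)
  suffices a + γ ^ (n * B) / n * (avg - a) ≤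
      minRatio (pushIter W x₀ (s + n * B)) (y (s + n * B)) by linarith
  refine (le_minRatio_iff (hy _)).2 fun k => ?_
  have hyk : y (s + n * B) k ≤ n := by
    rw [← sum_pushIter_one hW (s + n * B)]
    exact Finset.single_le_sum (fun j _ => (hy _ j).le) (Finset.mem_univ k)
  have hk := hgain k
  rw [hmass] at hk
  simp only [Pi.sub_apply, Pi.smul_apply, smul_eq_mul, Pi.zero_apply, sub_nonneg] at hk ⊢
  have hc : 0 ≤ γ ^ (n * B) / n * (avg - a) := by positivity
  calc (a + γ ^ (n * B) / n * (avg - a)) * y (s + n * B) k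
      ≤ a * y (s + n * B) k + γ ^ (n * B) / n * (avg - a) * n := by
        rw [add_mul]; gcongr
    _ = a * y (s + n * B) k + γ ^ (n * B) * (avg - a) := by field_simp
    _ ≤ pushIter W x₀ (s + n * B) k := by linarith

theorem eventually_lt_pushIter_div (hW : ∀ t, ColStochastic (W t))
    (hdiag : ∀ t i, 0 < W t i i) {γ : ℝ} (hγ : 0 < γ)
    (hWγ : ∀ t i j, 0 < W t i j → γ ≤ W t i j) {B : ℕ}
    (hwin : ∃ᶠ s in atTop,
      ∀ k < n, IrreducibleMat (∑ t ∈ Finset.Ico (s + k * B) (s + (k + 1) * B), W t))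
    (x₀ : Fin n → ℝ) (i : Fin n) {a : ℝ} (ha : a < (∑ j, x₀ j) / n) :
    ∀ᶠ t in atTop, a < pushIter W x₀ t i / pushIter W (fun _ => 1) t i := by
  set avg := (∑ j, x₀ j) / n
  set m := fun t => minRatio (pushIter W x₀ t) (pushIter W (fun _ => 1) t)
  have hq : 1 - γ ^ (n * B) / n < 1 := by
    have : 0 < γ ^ (n * B) / n := div_pos (pow_pos hγ _) (Nat.cast_pos.2 (NeZero.pos n))
    linarith
  have hgap : Tendsto (fun t => avg - m t) atTop (𝓝 0) :=
    tendsto_zero_of_antitone_of_frequently_le_mul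
      (fun _ _ hst => sub_le_sub_left (monotone_minRatio_pushIter hW hdiag x₀ hst) _)
      (fun t => sub_nonneg.2 (minRatio_pushIter_le_avg hW hdiag x₀ t)) hq
      (hwin.mono fun _ hirr =>
        ⟨_, avg_sub_minRatio_pushIter_le hW hdiag hγ.le hWγ hirr x₀⟩)
  filter_upwards [hgap.eventually (gt_mem_nhds (sub_pos.2 ha))] with t ht
  calc a < m t := by linarith
    _ ≤ _ := minRatio_le_div _ _ i

theorem tendsto_pushIter_div (hW : ∀ t, ColStochastic (W t))
    (hdiag : ∀ t i, 0 < W t i i) {γ : ℝ} (hγ : 0 < γ)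
    (hWγ : ∀ t i j, 0 < W t i j → γ ≤ W t i j) {B : ℕ}
    (hwin : ∃ᶠ s in atTop,
      ∀ k < n, IrreducibleMat (∑ t ∈ Finset.Ico (s + k * B) (s + (k + 1) * B), W t))
    (x₀ : Fin n → ℝ) (i : Fin n) :
    Tendsto (fun t => pushIter W x₀ t i / pushIter W (fun _ => 1) t i) atTop
      (𝓝 ((∑ j, x₀ j) / n)) := by
  refine tendsto_order.2 ⟨fun a ha => eventually_lt_pushIter_div hW hdiag hγ hWγ hwin x₀ i ha,
    fun a ha => ?_⟩
  have hneg : -a < (∑ j, (-x₀) j) / n := by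
    simp only [Pi.neg_apply, Finset.sum_neg_distrib, neg_div]
    exact neg_lt_neg ha
  filter_upwards [eventually_lt_pushIter_div hW hdiag hγ hWγ hwin (-x₀) i hneg] with t ht
  rw [pushIter_neg, Pi.neg_apply, neg_div] at ht
  exact lt_of_neg_lt_neg ht

end PushSum

open MeasureTheory ProbabilityTheory ENNReal Function in
theorem ae_frequently_forall_mem_of_iIndepFun {Ω ι β : Type*} [MeasurableSpace Ω]
    {μ : Measure Ω} [IsProbabilityMeasure μ] [MeasurableSpace β] {f : ι → Ω → β}
    (hf : ∀ p, Measurable (f p)) (hindep : iIndepFun f μ) {S : ι → Set β}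
    (hS : ∀ p, MeasurableSet (S p)) {blk : ℕ → Finset ι} (hdisj : Pairwise (Disjoint on blk))
    {N : ℕ} (hcard : ∀ m, (blk m).card ≤ N) {δ : ℝ≥0∞} (hδ : δ ≠ 0)
    (hprob : ∀ m, ∀ p ∈ blk m, δ ≤ μ (f p ⁻¹' S p)) :
    ∀ᵐ ω ∂μ, ∃ᶠ m in atTop, ∀ p ∈ blk m, f p ω ∈ S p := by
  classical
  set E : ℕ → Set Ω := fun m => ⋂ p ∈ blk m, f p ⁻¹' S p
  have hEmeas : ∀ m, MeasurableSet (E m) :=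
    fun m => Finset.measurableSet_biInter _ fun p _ => hf p (hS p)
  have hμ : ∀ T : Finset ι, μ (⋂ p ∈ T, f p ⁻¹' S p) = ∏ p ∈ T, μ (f p ⁻¹' S p) :=
    fun T => hindep.measure_inter_preimage_eq_mul T fun p _ => hS p
  have hE : iIndepSet E μ := by
    refine (iIndepSet_iff_meas_biInter hEmeas).2 fun T => ?_
    simp only [E]
    rw [← Finset.set_biInter_biUnion, hμ, Finset.prod_biUnion fun m _ m' _ hmm' => hdisj hmm']
    simp only [hμ]
  have hδ' : min δ 1 ^ N ≠ 0 := pow_ne_zero _ (by simp [hδ])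
  have hsum : ∑' m, μ (E m) = ∞ := by
    refine top_le_iff.1 ((ENNReal.tsum_const_eq_top_of_ne_zero hδ').symm.le.trans
      (ENNReal.tsum_le_tsum fun m => ?_))
    calc min δ 1 ^ N ≤ min δ 1 ^ (blk m).card :=
          pow_le_pow_right_of_le_one' (min_le_right _ _) (hcard m)
      _ = ∏ p ∈ blk m, min δ 1 := (Finset.prod_const _).symm
      _ ≤ μ (E m) := by
        rw [hμ]
        exact Finset.prod_le_prod' fun p hp => (min_le_left _ _).trans (hprob m p hp)
  have hlimsup : ∀ᵐ ω ∂μ, ω ∈ limsup E atTop := by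
    rw [ae_mem_iff_measure_eq (MeasurableSet.measurableSet_limsup hEmeas).nullMeasurableSet,
      measure_univ]
    exact measure_limsup_eq_one hEmeas hE hsum
  filter_upwards [hlimsup] with ω hω
  exact (mem_limsup_iff_frequently_mem.1 hω).mono fun m hm => Set.mem_iInter₂.1 hm

theorem irreducibleMat_window_of_pos_imp {n B m : ℕ} {P W : ℕ → Matrix (Fin n) (Fin n) ℝ}
    (hPirr : ∀ w, IrreducibleMat (∑ t ∈ Finset.Ico (w * B) ((w + 1) * B), P t))
    (hW : ∀ t i j, 0 ≤ W t i j)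
    (hsupp : ∀ t ∈ Finset.Ico (m * (n * B)) ((m + 1) * (n * B)), ∀ i j,
      0 < P t i j → 0 < W t i j) (k : ℕ) (hk : k < n) :
    IrreducibleMat (∑ t ∈ Finset.Ico (m * (n * B) + k * B) (m * (n * B) + (k + 1) * B), W t) := by
  have hlo : m * (n * B) + k * B = (m * n + k) * B := by ring
  have hhi : m * (n * B) + (k + 1) * B = (m * n + k + 1) * B := by ring
  rw [hlo, hhi]
  refine (hPirr (m * n + k)).sum_of_pos_imp (fun t _ => hW t) fun t ht => hsupp t ?_
  have hkB : (k + 1) * B ≤ n * B := Nat.mul_le_mul_right B hk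
  simp only [Finset.mem_Ico] at ht ⊢
  constructor <;> nlinarith

section Wof

variable {n : ℕ} {Ω : Type*} {R : ℕ → Fin n → Fin n → Ω → ℝ} {t : ℕ} {ω : Ω}

theorem one_le_sum_col (h01 : ∀ i j, R t i j ω = 0 ∨ R t i j ω = 1)
    (hdiag : ∀ j, R t j j ω = 1) (j : Fin n) : 1 ≤ ∑ k, R t k j ω := by
  rw [← hdiag j]
  refine Finset.single_le_sum (f := fun k => R t k j ω) (fun k _ => ?_) (Finset.mem_univ j)
  rcases h01 k j with h | h <;> simp [h]

theorem sum_col_le (h01 : ∀ i j, R t i j ω = 0 ∨ R t i j ω = 1) (j : Fin n) :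
    ∑ k, R t k j ω ≤ n := by
  calc ∑ k, R t k j ω ≤ ∑ _k : Fin n, (1 : ℝ) :=
        Finset.sum_le_sum fun k _ => by rcases h01 k j with h | h <;> simp [h]
    _ = n := by simp

theorem colStochastic_Wof (h01 : ∀ i j, R t i j ω = 0 ∨ R t i j ω = 1)
    (hdiag : ∀ j, R t j j ω = 1) : ColStochastic (Wof R t ω) := by
  have hpos j := zero_lt_one.trans_le (one_le_sum_col h01 hdiag j)
  refine ⟨fun i j => div_nonneg ?_ (hpos j).le, fun j => ?_⟩
  · rcases h01 i j with h | h <;> simp [h]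
  · simp only [Wof, ← Finset.sum_div, div_self (hpos j).ne']

theorem Wof_pos (h01 : ∀ i j, R t i j ω = 0 ∨ R t i j ω = 1)
    (hdiag : ∀ j, R t j j ω = 1) {i j : Fin n} (h : R t i j ω = 1) : 0 < Wof R t ω i j := by
  simp only [Wof, h]
  exact one_div_pos.2 (zero_lt_one.trans_le (one_le_sum_col h01 hdiag j))

theorem inv_le_Wof (h01 : ∀ i j, R t i j ω = 0 ∨ R t i j ω = 1)
    (hdiag : ∀ j, R t j j ω = 1) {i j : Fin n} (hpos : 0 < Wof R t ω i j) :
    (n : ℝ)⁻¹ ≤ Wof R t ω i j := by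
  rcases h01 i j with h | h
  · simp [Wof, h] at hpos
  · simp only [Wof, h, inv_eq_one_div]
    exact one_div_le_one_div_of_le (zero_lt_one.trans_le (one_le_sum_col h01 hdiag j))
      (sum_col_le h01 j)

end Wof

noncomputable def supportBlock {n : ℕ} (P : ℕ → Matrix (Fin n) (Fin n) ℝ) (L m : ℕ) :
    Finset (ℕ × Fin n × Fin n) :=
  (Finset.Ico (m * L) ((m + 1) * L) ×ˢ Finset.univ).filter fun p => P p.1 p.2.1 p.2.2 ≠ 0

theorem mem_supportBlock {n : ℕ} {P : ℕ → Matrix (Fin n) (Fin n) ℝ} {L m : ℕ}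
    {p : ℕ × Fin n × Fin n} :
    p ∈ supportBlock P L m ↔ p.1 ∈ Finset.Ico (m * L) ((m + 1) * L) ∧ P p.1 p.2.1 p.2.2 ≠ 0 := by
  simp [supportBlock]

theorem card_supportBlock_le {n : ℕ} (P : ℕ → Matrix (Fin n) (Fin n) ℝ) (L m : ℕ) :
    (supportBlock P L m).card ≤ L * (n * n) := by
  refine (Finset.card_filter_le _ _).trans_eq ?_
  simp [Finset.card_product, Nat.card_Ico, add_mul]

theorem pairwise_disjoint_supportBlock {n : ℕ} (P : ℕ → Matrix (Fin n) (Fin n) ℝ) (L : ℕ) :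
    Pairwise (Function.onFun Disjoint (supportBlock P L)) := by
  intro m m' hmm'
  refine Finset.disjoint_left.2 fun p hp hp' => hmm' ?_
  rw [mem_supportBlock, Finset.mem_Ico] at hp hp'
  rcases Nat.lt_trichotomy m m' with h | h | h
  · have := Nat.mul_le_mul_right L (show m + 1 ≤ m' from h); omega
  · exact h
  · have := Nat.mul_le_mul_right L (show m' + 1 ≤ m from h); omega

theorem random_model_average_consensus_general
    {Ω : Type*} [MeasurableSpace Ω] (μ : MeasureTheory.Measure Ω)
    [MeasureTheory.IsProbabilityMeasure μ]
    {n : ℕ} (ε : ℝ) (hε : 0 < ε) (B : ℕ) (hB : 1 ≤ B)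
    (P : ℕ → Matrix (Fin n) (Fin n) ℝ)
    (hPdiag : ∀ t i, P t i i = 1)
    (hPeps : ∀ t i j, P t i j ≠ 0 → ε ≤ P t i j)
    (hPirr : ∀ t : ℕ, IrreducibleMat (∑ t' ∈ Finset.Ico (t * B) ((t + 1) * B), P t'))
    (R : ℕ → Fin n → Fin n → Ω → ℝ)
    (hRmeas : ∀ t i j, Measurable (R t i j))
    (hR01 : ∀ t i j ω, R t i j ω = 0 ∨ R t i j ω = 1)
    (hRP : ∀ t i j, μ {ω | R t i j ω = 1} = ENNReal.ofReal (P t i j))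
    (hindep : ProbabilityTheory.iIndepFun
      (fun (p : ℕ × Fin n × Fin n) ω => R p.1 p.2.1 p.2.2 ω) μ)
    :
    ∀ (x0 : Fin n → ℝ) (i : Fin n), ∀ᵐ ω ∂μ,
      Filter.Tendsto
        (fun t => pushIter (fun s => Wof R s ω) x0 t i
            / pushIter (fun s => Wof R s ω) (fun _ => 1) t i)
        Filter.atTop (nhds ((∑ j, x0 j) / n)) := by
  intro x0 i
  have : NeZero n := ⟨i.pos.ne'⟩
  have hdiag_ae : ∀ᵐ ω ∂μ, ∀ t j, R t j j ω = 1 := by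
    refine ae_all_iff.2 fun t => ae_all_iff.2 fun j => ?_
    have hmeas : MeasurableSet {ω | R t j j ω = 1} := hRmeas t j j (measurableSet_singleton 1)
    rw [ae_iff_measure_eq hmeas.nullMeasurableSet, hRP, hPdiag, ENNReal.ofReal_one, measure_univ]
  have hblocks : ∀ᵐ ω ∂μ, ∃ᶠ m in atTop,
      ∀ p ∈ supportBlock P (n * B) m, R p.1 p.2.1 p.2.2 ω ∈ ({1} : Set ℝ) :=
    ae_frequently_forall_mem_of_iIndepFun (fun p => hRmeas p.1 p.2.1 p.2.2) hindep
      (fun _ => measurableSet_singleton 1) (pairwise_disjoint_supportBlock P _)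
      (card_supportBlock_le P _) (ENNReal.ofReal_pos.2 hε).ne' fun m p hp =>
        (hRP p.1 p.2.1 p.2.2).symm ▸
          ENNReal.ofReal_le_ofReal (hPeps _ _ _ (mem_supportBlock.1 hp).2)
  filter_upwards [hdiag_ae, hblocks] with ω hdiag hfreq
  have hW t : ColStochastic (Wof R t ω) := colStochastic_Wof (hR01 t · · ω) (hdiag t)
  have hwin : ∃ᶠ s in atTop, ∀ k < n,
      IrreducibleMat (∑ t ∈ Finset.Ico (s + k * B) (s + (k + 1) * B), Wof R t ω) := by
    refine (tendsto_id.atTop_mul_const' (Nat.mul_pos i.pos hB)).frequently_map _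
      (fun m hm => ?_) hfreq
    exact irreducibleMat_window_of_pos_imp hPirr (fun t => (hW t).1) fun t ht i j hP =>
      Wof_pos (hR01 t · · ω) (hdiag t) (hm (t, i, j) (mem_supportBlock.2 ⟨ht, hP.ne'⟩))
  exact tendsto_pushIter_div hW (fun t j => Wof_pos (hR01 t · · ω) (hdiag t) (hdiag t j))
    (inv_pos.2 (Nat.cast_pos.2 i.pos)) (fun t _ _ => inv_le_Wof (hR01 t · · ω) (hdiag t)) hwin x0 i

/-- In the random model, push-sum achieves average consensus almost
surely: for every initial state `x(0)` and every `i`, a.s. `z_i(t) → x̄`. -/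
theorem random_model_average_consensus
    {Ω : Type*} [MeasurableSpace Ω] (μ : MeasureTheory.Measure Ω)
    [MeasureTheory.IsProbabilityMeasure μ]
    {n : ℕ} (hn : 2 ≤ n) (ε : ℝ) (hε : 0 < ε) (B : ℕ) (hB : 1 ≤ B)
    (P : ℕ → Matrix (Fin n) (Fin n) ℝ)
    (hP01 : ∀ t i j, P t i j ∈ Set.Icc (0:ℝ) 1)
    (hPdiag : ∀ t i, P t i i = 1)
    (hPeps : ∀ t i j, P t i j ≠ 0 → ε ≤ P t i j)
    (hPirr : ∀ t : ℕ, IrreducibleMat (∑ t' ∈ Finset.Ico (t * B) ((t + 1) * B), P t'))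
    (R : ℕ → Fin n → Fin n → Ω → ℝ)
    (hRmeas : ∀ t i j, Measurable (R t i j))
    (hR01 : ∀ t i j ω, R t i j ω = 0 ∨ R t i j ω = 1)
    (hRP : ∀ t i j, μ {ω | R t i j ω = 1} = ENNReal.ofReal (P t i j))
    (hindep : ProbabilityTheory.iIndepFun
      (fun (p : ℕ × Fin n × Fin n) ω => R p.1 p.2.1 p.2.2 ω) μ)
    :
    ∀ (x0 : Fin n → ℝ) (i : Fin n), ∀ᵐ ω ∂μ,
      Filter.Tendsto
        (fun t => pushIter (fun s => Wof R s ω) x0 t i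
            / pushIter (fun s => Wof R s ω) (fun _ => 1) t i)
        Filter.atTop (nhds ((∑ j, x0 j) / n)) :=
  random_model_average_consensus_general μ ε hε B hB P hPdiag hPeps hPirr R hRmeas hR01 hRP hindep
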